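/- Let n ≥ 2. Every spherical design X of harmonic index 2 on the unit sphere S^{n-1} ⊆ ℝ^n satisfies |X| ≥ n. -/
import Mathlib


open scoped BigOperators Classical
open MvPolynomial

/-- The Laplacian `∑ i, ∂²/∂xᵢ²` of a multivariate polynomial. -/
noncomputable def mvLaplacian {n : ℕ} (f : MvPolynomial (Fin n) ℝ) : MvPolynomial (Fin n) ℝ :=
  ∑ i, MvPolynomial.pderiv i (MvPolynomial.pderiv i f)

/-- A finite nonempty subset `X` of the unit sphere `S^{n-1} ⊆ ℝ^n` is a spherical design of
harmonic index `t` if `∑_{x ∈ X} f(x) = 0` for every harmonic homogeneous polynomial `f`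
of degree `t`. -/
def IsHarmonicIndexDesign (n t : ℕ) (X : Finset (Fin n → ℝ)) : Prop :=
  X.Nonempty ∧ (∀ x ∈ X, ∑ i, x i ^ 2 = 1) ∧
    ∀ f : MvPolynomial (Fin n) ℝ, mvLaplacian f = 0 → f.IsHomogeneous t →
      ∑ x ∈ X, MvPolynomial.eval x f = 0

lemma harm_mul {n : ℕ} (i j : Fin n) (hij : i ≠ j) :
    mvLaplacian (X i * X j : MvPolynomial (Fin n) ℝ) = 0 := by
  unfold mvLaplacian
  apply Finset.sum_eq_zero
  intro k _
  rcases eq_or_ne k i with rfl|hki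
  · simp [pderiv_X_of_ne hij.symm, pderiv_X_self, pderiv_X_of_ne hij]
  · rcases eq_or_ne k j with rfl|hkj
    · simp [pderiv_X_of_ne hij, pderiv_X_self, pderiv_X_of_ne hki.symm]
    · simp [pderiv_X_of_ne hki.symm, pderiv_X_of_ne hkj.symm]

lemma harm_sub {n : ℕ} (i j : Fin n) :
    mvLaplacian (X i ^ 2 - X j ^ 2 : MvPolynomial (Fin n) ℝ) = 0 := by
  unfold mvLaplacian
  have key : ∀ i k : Fin n, pderiv k (pderiv k (X i ^ 2 : MvPolynomial (Fin n) ℝ)) =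
      if k = i then 2 else 0 := by
    intro i k
    rcases eq_or_ne k i with rfl|hki
    · simp [pow_two, pderiv_X_self]; ring_nf
    · simp [pow_two, pderiv_X_of_ne hki.symm, hki]
  simp only [map_sub, key]
  simp

/-- every spherical design of harmonic index `2` on `S^{n-1}` has at least
`n` points. -/
theorem card_ge_of_harmonic_index_two_design (n : ℕ) (hn : 2 ≤ n)
    (X : Finset (Fin n → ℝ)) (hX : IsHarmonicIndexDesign n 2 X) :
    n ≤ X.card := by
  obtain ⟨hne, hsph, hdes⟩ := hX
  have hnpos : 0 < n := by omega
  -- off-diagonal sums vanish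
  have h1 : ∀ i j : Fin n, i ≠ j → ∑ x ∈ X, x i * x j = 0 := by
    intro i j hij
    have := hdes (MvPolynomial.X i * MvPolynomial.X j) (harm_mul i j hij)
      (by simpa using (isHomogeneous_X ℝ i).mul (isHomogeneous_X ℝ j))
    simpa using this
  -- diagonal sums are all equal
  have h2 : ∀ i j : Fin n, ∑ x ∈ X, x i ^ 2 = ∑ x ∈ X, x j ^ 2 := by
    intro i j
    have hom : (MvPolynomial.X i ^ 2 - MvPolynomial.X j ^ 2 :
        MvPolynomial (Fin n) ℝ).IsHomogeneous 2 :=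
      ((isHomogeneous_X ℝ i).pow 2).sub ((isHomogeneous_X ℝ j).pow 2)
    have := hdes _ (harm_sub i j) hom
    simp only [map_sub, map_pow, eval_X] at this
    rw [Finset.sum_sub_distrib, sub_eq_zero] at this
    exact this
  set i0 : Fin n := ⟨0, hnpos⟩
  set c : ℝ := ∑ x ∈ X, x i0 ^ 2 with hc
  have hnc : (n : ℝ) * c = X.card := by
    have : ∑ i : Fin n, ∑ x ∈ X, x i ^ 2 = (X.card : ℝ) := by
      rw [Finset.sum_comm]
      rw [Finset.sum_congr rfl (fun x hx => hsph x hx)]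
      simp
    calc (n : ℝ) * c = ∑ i : Fin n, c := by simp [mul_comm]
      _ = ∑ i : Fin n, ∑ x ∈ X, x i ^ 2 := Finset.sum_congr rfl (fun i _ => (h2 i0 i))
      _ = X.card := this
  have hcpos : 0 < c := by
    have hcard : (0 : ℝ) < X.card := by exact_mod_cast Finset.card_pos.mpr hne
    have hn' : (0:ℝ) < n := by exact_mod_cast hnpos
    nlinarith
  -- the linear map v ↦ (⟨x, v⟩)_{x ∈ X}
  let φ : (Fin n → ℝ) →ₗ[ℝ] (↥X → ℝ) :=
    LinearMap.pi fun x : ↥X => ∑ i, (x : Fin n → ℝ) i • LinearMap.proj i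
  have hφ : ∀ (v : Fin n → ℝ) (x : ↥X), φ v x = ∑ i, (x : Fin n → ℝ) i * v i := by
    intro v x; simp [φ]
  have hinj : Function.Injective φ := by
    rw [← LinearMap.ker_eq_bot, LinearMap.ker_eq_bot']
    intro v hv
    have hv' : ∀ x ∈ X, ∑ i, x i * v i = 0 := by
      intro x hx
      have := congrFun hv ⟨x, hx⟩
      rw [hφ] at this; simpa using this
    have key : ∑ x ∈ X, (∑ i, x i * v i) ^ 2 = c * ∑ i, v i ^ 2 := by
      have expand : ∀ x : Fin n → ℝ, (∑ i, x i * v i) ^ 2 =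
          ∑ i, ∑ j, (v i * v j) * (x i * x j) := by
        intro x
        rw [pow_two, Finset.sum_mul_sum]
        exact Finset.sum_congr rfl fun i _ => Finset.sum_congr rfl fun j _ => by ring
      rw [Finset.sum_congr rfl (fun x _ => expand x), Finset.sum_comm]
      have : ∀ i : Fin n, ∑ x ∈ X, ∑ j, (v i * v j) * (x i * x j) = v i ^ 2 * c := by
        intro i
        rw [Finset.sum_comm]
        rw [Finset.sum_eq_single i]
        · have hd : ∑ x ∈ X, x i * x i = c := by
            rw [Finset.sum_congr rfl (fun x _ => (pow_two (x i)).symm), h2 i i0]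
          rw [← Finset.mul_sum, hd]; ring
        · intro j _ hji
          rw [← Finset.mul_sum, h1 i j (Ne.symm hji), mul_zero]
        · intro h; exact absurd (Finset.mem_univ i) h
      rw [Finset.sum_congr rfl fun i _ => this i, ← Finset.sum_mul]
      ring
    have hzero : ∑ x ∈ X, (∑ i, x i * v i) ^ 2 = 0 :=
      Finset.sum_eq_zero fun x hx => by rw [hv' x hx]; ring
    rw [hzero] at key
    have hsum : ∑ i, v i ^ 2 = 0 := by
      rcases mul_eq_zero.mp key.symm with h | h
      · exact absurd h hcpos.ne'
      · exact h
    funext i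
    have := (Finset.sum_eq_zero_iff_of_nonneg (fun j _ => sq_nonneg (v j))).mp hsum i
      (Finset.mem_univ i)
    exact pow_eq_zero_iff (by norm_num) |>.mp this
  have := LinearMap.finrank_le_finrank_of_injective hinj
  rwa [Module.finrank_fin_fun, Module.finrank_fintype_fun_eq_card, Fintype.card_coe] at this
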